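/- arXiv:2201.01211 — 3 statements merged into one kernel-verified Lean document; each statement's English description precedes it below -/
import Mathlib

section
/- Let S be a finite nonempty set of positive integers with maximum element n_h, and let Q_S = {∞} ∪ {n/m : n ∈ S, m ∈ ℤ, m ≠ 0} ⊆ ℚ̄. Let L = [a,b] be a closed circular interval in ℚ̄ with endpoints a, b ∈ Q_S whose interior [a,b] \ {a,b} is disjoint from Q_S. If ∞ ∈ L and L has at least two elements, then either L = [n_h, ∞] = {∞} ∪ {q ∈ ℚ : q ≥ n_h} or L = [∞, −n_h] = {∞} ∪ {q ∈ ℚ : q ≤ −n_h}. -/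
/-- The closed circular interval `[a,b]` in `ℚ̄ = ℚ ∪ {∞}`, where `∞` is
represented by `none`. -/
def cInt : Option ℚ → Option ℚ → Set (Option ℚ)
  | some a, some b =>
      if a ≤ b then {x | ∃ q : ℚ, x = some q ∧ a ≤ q ∧ q ≤ b}
      else {none} ∪ {x | ∃ q : ℚ, x = some q ∧ (a ≤ q ∨ q ≤ b)}
  | some a, none => {none} ∪ {x | ∃ q : ℚ, x = some q ∧ a ≤ q}
  | none, some b => {none} ∪ {x | ∃ q : ℚ, x = some q ∧ q ≤ b}
  | none, none => {none}

/-!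
Every finite slope `n/m` of `Q_S` satisfies `|n/m| ≤ n ≤ n_h`, while `±n_h = n_h/(±1)`
themselves lie in `Q_S`. An interval through `∞` with two finite endpoints has `∞ ∈ Q_S` in
its interior, and `[∞, ∞]` is a point; so `L` is `[α, ∞]` or `[∞, β]`. In the first case
`α ≤ n_h`, and `α < n_h` would put `n_h` in the interior, hence `α = n_h`; the second case
is symmetric.
-/

lemma abs_intCast_div_intCast_le (n : ℤ) {m : ℤ} (hm : m ≠ 0) :
    |(n / m : ℚ)| ≤ |(n : ℚ)| := by
  rw [abs_div]
  exact div_le_self (abs_nonneg _) (by exact_mod_cast Int.one_le_abs hm)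

/-- The set `Q_S` of the statement. -/
def slopes (S : Finset ℤ) : Set (Option ℚ) :=
  {none} ∪ {x | ∃ n ∈ S, ∃ m : ℤ, m ≠ 0 ∧ x = some ((n : ℚ) / (m : ℚ))}

section slopes

variable {S : Finset ℤ} (hS : S.Nonempty)

lemma none_mem_slopes : none ∈ slopes S := Or.inl rfl

lemma some_max'_mem_slopes : some ((S.max' hS : ℤ) : ℚ) ∈ slopes S :=
  Or.inr ⟨_, S.max'_mem hS, 1, one_ne_zero, by simp⟩

lemma some_neg_max'_mem_slopes : some (-((S.max' hS : ℤ) : ℚ)) ∈ slopes S :=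
  Or.inr ⟨_, S.max'_mem hS, -1, by norm_num, by simp [div_neg]⟩

variable {hS}

lemma abs_le_max'_of_some_mem_slopes (hpos : ∀ n ∈ S, 0 < n) {q : ℚ}
    (hq : some q ∈ slopes S) : |q| ≤ S.max' hS := by
  obtain ⟨n, hn, m, hm, hq⟩ := hq.resolve_left (by simp)
  obtain rfl := Option.some_injective _ hq
  calc |(n / m : ℚ)| ≤ |(n : ℚ)| := abs_intCast_div_intCast_le n hm
    _ = n := abs_of_pos (by exact_mod_cast hpos n hn)
    _ ≤ S.max' hS := by exact_mod_cast S.le_max' n hn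

end slopes

lemma some_mem_cInt_some_none_diff {α q : ℚ} (h : α < q) :
    some q ∈ cInt (some α) none \ {some α, none} :=
  ⟨Or.inr ⟨q, rfl, h.le⟩, by simp [h.ne']⟩

lemma some_mem_cInt_none_some_diff {β q : ℚ} (h : q < β) :
    some q ∈ cInt none (some β) \ {none, some β} :=
  ⟨Or.inr ⟨q, rfl, h.le⟩, by simp [h.ne]⟩

lemma none_notMem_cInt_of_le {α β : ℚ} (h : α ≤ β) : none ∉ cInt (some α) (some β) := by
  simp [cInt, if_pos h]

lemma none_mem_cInt_diff_of_lt {α β : ℚ} (h : β < α) :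
    none ∈ cInt (some α) (some β) \ {some α, some β} := by
  simp [cInt, if_neg h.not_ge]

section gap

variable {S : Finset ℤ} {hS : S.Nonempty}

lemma eq_max'_of_gap (hpos : ∀ n ∈ S, 0 < n) {α : ℚ} (hα : some α ∈ slopes S)
    (hgap : ∀ x ∈ cInt (some α) none \ {some α, none}, x ∉ slopes S) :
    α = S.max' hS := by
  refine le_antisymm (abs_le.mp (abs_le_max'_of_some_mem_slopes hpos hα)).2 (not_lt.mp fun h => ?_)
  exact hgap _ (some_mem_cInt_some_none_diff h) (some_max'_mem_slopes hS)

lemma eq_neg_max'_of_gap (hpos : ∀ n ∈ S, 0 < n) {β : ℚ} (hβ : some β ∈ slopes S)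
    (hgap : ∀ x ∈ cInt none (some β) \ {none, some β}, x ∉ slopes S) :
    β = -(S.max' hS : ℚ) := by
  refine le_antisymm (not_lt.mp fun h => ?_) (abs_le.mp (abs_le_max'_of_some_mem_slopes hpos hβ)).1
  exact hgap _ (some_mem_cInt_none_some_diff h) (some_neg_max'_mem_slopes hS)

end gap

/-- If `S` is a finite nonempty set of positive integers with maximum `n_h`,
`Q_S = {∞} ∪ {n/m : n ∈ S, m ≠ 0}`, and `L = [a,b]` is a closed circular
interval in `ℚ̄` with endpoints in `Q_S`, interior disjoint from `Q_S`,
containing `∞` and at least two elements, then `L = [n_h, ∞]` or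
`L = [∞, -n_h]`. -/
theorem interval_lemma (S : Finset ℤ) (hS : S.Nonempty) (hpos : ∀ n ∈ S, 0 < n)
    (nh : ℤ) (hnh : nh = S.max' hS)
    (QS : Set (Option ℚ))
    (hQS : QS = {none} ∪
      {x | ∃ n ∈ S, ∃ m : ℤ, m ≠ 0 ∧ x = some ((n : ℚ) / (m : ℚ))})
    (a b : Option ℚ) (ha : a ∈ QS) (hb : b ∈ QS)
    (L : Set (Option ℚ)) (hL : L = cInt a b)
    (hint : (L \ {a, b}) ∩ QS = ∅)
    (hinf : none ∈ L)
    (htwo : L.Nontrivial) :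
    L = {none} ∪ {x | ∃ q : ℚ, x = some q ∧ (nh : ℚ) ≤ q} ∨
    L = {none} ∪ {x | ∃ q : ℚ, x = some q ∧ q ≤ -(nh : ℚ)} := by
  replace hQS : QS = slopes S := hQS
  subst hnh hQS hL
  have hgap : ∀ x ∈ cInt a b \ {a, b}, x ∉ slopes S := fun _ hx hQ =>
    (Set.disjoint_iff_inter_eq_empty.mpr hint).notMem_of_mem_left hx hQ
  rcases a with _ | α <;> rcases b with _ | β
  · exact absurd rfl htwo.ne_singleton
  · right
    rw [eq_neg_max'_of_gap hpos hb hgap]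
    rfl
  · left
    rw [eq_max'_of_gap hpos ha hgap]
    rfl
  · rcases le_or_gt α β with hαβ | hβα
    · exact absurd hinf (none_notMem_cInt_of_le hαβ)
    · exact absurd none_mem_slopes (hgap _ (none_mem_cInt_diff_of_lt hβα))
end

section
/- Let L ⊆ ℚ̄ × ℚ̄ satisfy the slice dichotomy and the unknot condition. Suppose (r₁, r₂) ∈ L where r₁ and r₂ are positive rational numbers. For i = 1, 2 define I_i ⊆ ℚ̄ by I_i = [⌊r_i⌋, ∞] if r_i ≥ 1, and I_i = {∞} ∪ {q ∈ ℚ : q > 0} if 0 < r_i < 1. Then I₁ × I₂ ⊆ L. -/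
/-- The interval `[k,∞] = {∞} ∪ {q : k ≤ q}` in `ℚ̄ = ℚ ∪ {∞}` (`∞ = none`). -/
def infSlice (k : ℤ) : Set (Option ℚ) :=
  {none} ∪ {x | ∃ q : ℚ, x = some q ∧ (k : ℚ) ≤ q}

/-- The interval `[∞,−k] = {∞} ∪ {q : q ≤ −k}` in `ℚ̄`. -/
def negSlice (k : ℤ) : Set (Option ℚ) :=
  {none} ∪ {x | ∃ q : ℚ, x = some q ∧ q ≤ -(k : ℚ)}

/-- A subset of `ℚ̄` is a standard slice if it is `ℚ̄ \ {0}`, or `[k,∞]`,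
or `[∞,−k]` for some positive integer `k`. -/
def StandardSlice (I : Set (Option ℚ)) : Prop :=
  I = {some 0}ᶜ ∨ (∃ k : ℤ, 0 < k ∧ I = infSlice k) ∨
    (∃ k : ℤ, 0 < k ∧ I = negSlice k)

/-- `L` satisfies the slice dichotomy if every horizontal or vertical slice of
`L` with at least two elements is a standard slice. -/
def SliceDichotomy (L : Set (Option ℚ × Option ℚ)) : Prop :=
  ∀ r : Option ℚ,
    ({s | (r, s) ∈ L}.Nontrivial → StandardSlice {s | (r, s) ∈ L}) ∧
    ({s | (s, r) ∈ L}.Nontrivial → StandardSlice {s | (s, r) ∈ L})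

/-- `L` satisfies the unknot condition if `(∞,s) ∈ L` and `(s,∞) ∈ L` for
every `s ∈ ℚ̄` with `s ≠ 0`. -/
def UnknotCondition (L : Set (Option ℚ × Option ℚ)) : Prop :=
  ∀ s : Option ℚ, s ≠ some 0 → (none, s) ∈ L ∧ (s, none) ∈ L

/-- `L` satisfies the no-zero condition if `(r,0) ∉ L` and `(0,r) ∉ L` for
every `r ∈ ℚ̄`. -/
def NoZeroCondition (L : Set (Option ℚ × Option ℚ)) : Prop :=
  ∀ r : Option ℚ, (r, some 0) ∉ L ∧ (some 0, r) ∉ L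

/-- The set `Q* = {q ∈ ℚ : q ≠ 0} ⊆ ℚ̄`. -/
def Qstar : Set (Option ℚ) := {x | ∃ q : ℚ, q ≠ 0 ∧ x = some q}

/-!
The column of `L` through `r₂` contains `∞` (unknot condition) and `r₁`, so by the slice
dichotomy it is a standard slice containing the positive rational `r₁`. Such a slice is either
`ℚ̄ \ {0}` or some `[k,∞]` with `k ≤ ⌊r₁⌋`, and both contain `I₁`. Hence `(x, r₂) ∈ L` for every
`x ∈ I₁`; as `x ≠ 0`, the row through `x` contains `∞` and `r₂`, and the same argument gives `I₂`.
-/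

/-- The interval `I_r` of the statement. -/
def posSlopeInterval (r : ℚ) : Set (Option ℚ) :=
  if 1 ≤ r then infSlice ⌊r⌋ else {none} ∪ {x | ∃ q : ℚ, x = some q ∧ 0 < q}

lemma infSlice_anti {k m : ℤ} (hkm : k ≤ m) : infSlice m ⊆ infSlice k := by
  rintro x (hx | ⟨q, rfl, hq⟩)
  · exact Or.inl hx
  · exact Or.inr ⟨q, rfl, le_trans (by exact_mod_cast hkm) hq⟩

lemma some_zero_notMem_posSlopeInterval (r : ℚ) : some 0 ∉ posSlopeInterval r := by
  unfold posSlopeInterval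
  split_ifs with h1
  · rintro (h | ⟨q, hq, hrq⟩)
    · simp at h
    · have : (1 : ℚ) ≤ ⌊r⌋ := by exact_mod_cast Int.le_floor.mpr (by exact_mod_cast h1)
      obtain rfl := Option.some_inj.mp hq
      linarith
  · rintro (h | ⟨q, hq, hq0⟩)
    · simp at h
    · obtain rfl := Option.some_inj.mp hq
      exact lt_irrefl 0 hq0

lemma StandardSlice.posSlopeInterval_subset {S : Set (Option ℚ)} (hS : StandardSlice S)
    {r : ℚ} (hr : 0 < r) (hrS : some r ∈ S) : posSlopeInterval r ⊆ S := by
  rcases hS with rfl | ⟨k, hk, rfl⟩ | ⟨k, hk, rfl⟩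
  · exact fun x hx hx0 => some_zero_notMem_posSlopeInterval r (hx0 ▸ hx)
  · obtain ⟨q, hq, hkq⟩ := hrS.resolve_left (by simp)
    rw [← Option.some_inj.mp hq] at hkq
    have h1r : (1 : ℚ) ≤ r := le_trans (by exact_mod_cast hk) hkq
    rw [posSlopeInterval, if_pos h1r]
    exact infSlice_anti (Int.le_floor.mpr hkq)
  · obtain ⟨q, hq, hqk⟩ := hrS.resolve_left (by simp)
    rw [← Option.some_inj.mp hq] at hqk
    have : (0 : ℚ) < k := by exact_mod_cast hk
    linarith

section Slices

variable {L : Set (Option ℚ × Option ℚ)}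

lemma SliceDichotomy.standardSlice_row (hdich : SliceDichotomy L) (hunknot : UnknotCondition L)
    {x : Option ℚ} (hx : x ≠ some 0) {s : ℚ} (hs : (x, some s) ∈ L) :
    StandardSlice {t | (x, t) ∈ L} :=
  (hdich x).1 ⟨none, (hunknot x hx).2, some s, hs, by simp⟩

lemma SliceDichotomy.standardSlice_col (hdich : SliceDichotomy L) (hunknot : UnknotCondition L)
    {y : Option ℚ} (hy : y ≠ some 0) {s : ℚ} (hs : (some s, y) ∈ L) :
    StandardSlice {t | (t, y) ∈ L} :=
  (hdich y).2 ⟨none, (hunknot y hy).1, some s, hs, by simp⟩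

end Slices

/-- A positive rational L-space slope propagates: if `(r₁, r₂) ∈ L` with
`r₁, r₂ > 0`, then `I₁ × I₂ ⊆ L`, where `I_i = [⌊r_i⌋, ∞]` if `r_i ≥ 1` and
`I_i = {∞} ∪ {q > 0}` if `0 < r_i < 1`. -/
theorem lspace_slope_propagation (L : Set (Option ℚ × Option ℚ))
    (hdich : SliceDichotomy L) (hunknot : UnknotCondition L)
    (r₁ r₂ : ℚ) (hr₁ : 0 < r₁) (hr₂ : 0 < r₂)
    (hmem : (some r₁, some r₂) ∈ L)
    (I₁ I₂ : Set (Option ℚ))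
    (hI₁ : I₁ = if 1 ≤ r₁ then infSlice ⌊r₁⌋
      else {none} ∪ {x | ∃ q : ℚ, x = some q ∧ 0 < q})
    (hI₂ : I₂ = if 1 ≤ r₂ then infSlice ⌊r₂⌋
      else {none} ∪ {x | ∃ q : ℚ, x = some q ∧ 0 < q}) :
    I₁ ×ˢ I₂ ⊆ L := by
  change I₁ = posSlopeInterval r₁ at hI₁
  change I₂ = posSlopeInterval r₂ at hI₂
  subst hI₁ hI₂
  rintro ⟨x, y⟩ ⟨hx, hy⟩
  have hr₂0 : some r₂ ≠ some 0 := by simpa using hr₂.ne'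
  have hxr₂ : (x, some r₂) ∈ L :=
    (hdich.standardSlice_col hunknot hr₂0 hmem).posSlopeInterval_subset hr₁ hmem hx
  have hx0 : x ≠ some 0 := fun h => some_zero_notMem_posSlopeInterval r₁ (h ▸ hx)
  exact (hdich.standardSlice_row hunknot hx0 hxr₂).posSlopeInterval_subset hr₂ hxr₂ hy
end

section
/- Let L ⊆ ℚ̄ × ℚ̄ satisfy the slice dichotomy, the unknot condition, and the no-zero condition, and suppose there exist natural numbers b₁, b₂ such that for all integers p₁, p₂ one has ((p₁ : ℚ), (p₂ : ℚ)) ∈ L if and only if p₁ ≥ 2b₁ + 1 and p₂ ≥ 2b₂ + 1. If moreover ((1 : ℚ), (1 : ℚ)) ∈ L, then for all nonzero rationals r₁, r₂ one has (r₁, r₂) ∈ L if and only if r₁ ≥ 1 and r₂ ≥ 1; equivalently, L = ([1, ∞] × [1, ∞]) ∪ ({∞} × Q*) ∪ (Q* × {∞}), where Q* = {q ∈ ℚ : q ≠ 0} ⊆ ℚ̄. -/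
/-! A nonzero row of `L` contains `∞`, so as soon as it meets `ℚ` it is a standard slice, and every
standard slice contains an integer. The integer points of `L` are those of `[1,∞] × [1,∞]` once
`(1,1) ∈ L`, so no row or column meets a non-positive integer, and row `1` is forced to be `[1,∞]`.
Hence column `1` is `[1,∞]` as well, which gives `(r,1) ∈ L` and then row `r` equal to `[1,∞]` for
every `r ≥ 1`. Conversely, a row meeting `ℚ` must be some `[k,∞]`, and column `k` then forces
`r ≥ 1`. The symmetry `(r,s) ↦ (s,r)` of the hypotheses turns every statement about rows into one
about columns. -/

theorem mem_infSlice {k : ℤ} {q : ℚ} : some q ∈ infSlice k ↔ (k : ℚ) ≤ q := by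
  simp [infSlice]

theorem mem_negSlice {k : ℤ} {q : ℚ} : some q ∈ negSlice k ↔ q ≤ -(k : ℚ) := by
  simp [negSlice]

namespace StandardSlice

variable {I : Set (Option ℚ)}

theorem exists_intCast_mem (hI : StandardSlice I) : ∃ p : ℤ, some (p : ℚ) ∈ I := by
  rcases hI with rfl | ⟨k, -, rfl⟩ | ⟨k, -, rfl⟩
  · exact ⟨1, by simp⟩
  · exact ⟨k, mem_infSlice.mpr le_rfl⟩
  · exact ⟨-k, mem_negSlice.mpr (by push_cast; rfl)⟩

theorem eq_infSlice_one (hI : StandardSlice I) (h₁ : some 1 ∈ I) (h₂ : some (-1) ∉ I) :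
    I = infSlice 1 := by
  rcases hI with rfl | ⟨k, hk, rfl⟩ | ⟨k, hk, rfl⟩
  · exact absurd (by simp) h₂
  · have : k ≤ 1 := by exact_mod_cast mem_infSlice.mp h₁
    obtain rfl : k = 1 := by omega
    rfl
  · have : (1 : ℚ) ≤ k := by exact_mod_cast hk
    linarith [mem_negSlice.mp h₁]

end StandardSlice

section Conditions

variable {L : Set (Option ℚ × Option ℚ)}

theorem SliceDichotomy.swap (hd : SliceDichotomy L) : SliceDichotomy (Prod.swap ⁻¹' L) :=
  fun r => ⟨(hd r).2, (hd r).1⟩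

theorem UnknotCondition.swap (hu : UnknotCondition L) : UnknotCondition (Prod.swap ⁻¹' L) :=
  fun s hs => ⟨(hu s hs).2, (hu s hs).1⟩

theorem NoZeroCondition.swap (hz : NoZeroCondition L) : NoZeroCondition (Prod.swap ⁻¹' L) :=
  fun r => ⟨(hz r).2, (hz r).1⟩

theorem NoZeroCondition.ne_zero_left (hz : NoZeroCondition L) {r : ℚ} {s : Option ℚ}
    (h : (some r, s) ∈ L) : r ≠ 0 := by
  rintro rfl
  exact (hz s).2 h

theorem mem_none_some_iff (hu : UnknotCondition L) (hz : NoZeroCondition L) {q : ℚ} :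
    (none, some q) ∈ L ↔ q ≠ 0 :=
  ⟨fun h => hz.swap.ne_zero_left h, fun hq => (hu (some q) (by simpa using hq)).1⟩

theorem eq_of_mem_some_some_iff (hu : UnknotCondition L) (hz : NoZeroCondition L)
    (h : ∀ r₁ r₂ : ℚ, (some r₁, some r₂) ∈ L ↔ 1 ≤ r₁ ∧ 1 ≤ r₂) :
    L = (infSlice 1 ×ˢ infSlice 1) ∪ ({none} ×ˢ Qstar) ∪ (Qstar ×ˢ {none}) := by
  ext ⟨_ | r₁, _ | r₂⟩
  · simpa [infSlice] using (hu none (by simp)).1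
  · simpa [infSlice, Qstar, mem_none_some_iff hu hz]
      using fun h : 1 ≤ r₂ => (one_pos.trans_le h).ne'
  · simpa [infSlice, Qstar, ← mem_none_some_iff hu.swap hz.swap]
      using fun h : 1 ≤ r₁ => (one_pos.trans_le h).ne'
  · simp [h, mem_infSlice, Qstar]

end Conditions

/-- The hypotheses of the theorem once `(1,1) ∈ L` has forced `b₁ = b₂ = 0`. -/
structure LSpaceSlopeSet (L : Set (Option ℚ × Option ℚ)) : Prop where
  sliceDichotomy : SliceDichotomy L
  unknot : UnknotCondition L
  noZero : NoZeroCondition L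
  intCast_mem_iff : ∀ p₁ p₂ : ℤ, (some (p₁ : ℚ), some (p₂ : ℚ)) ∈ L ↔ 1 ≤ p₁ ∧ 1 ≤ p₂

namespace LSpaceSlopeSet

variable {L : Set (Option ℚ × Option ℚ)} (hL : LSpaceSlopeSet L)
include hL

theorem swap : LSpaceSlopeSet (Prod.swap ⁻¹' L) where
  sliceDichotomy := hL.sliceDichotomy.swap
  unknot := hL.unknot.swap
  noZero := hL.noZero.swap
  intCast_mem_iff p₁ p₂ := (hL.intCast_mem_iff p₂ p₁).trans and_comm

theorem standardSlice_row {r q : ℚ} (h : (some r, some q) ∈ L) :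
    StandardSlice {s | (some r, s) ∈ L} :=
  have hr : some r ≠ some 0 := by simpa using hL.noZero.ne_zero_left h
  (hL.sliceDichotomy (some r)).1 ⟨some q, h, none, (hL.unknot (some r) hr).2, by simp⟩

theorem not_mem_of_left_lt_one {m : ℤ} (hm : m < 1) (r : ℚ) : (some (m : ℚ), some r) ∉ L := by
  intro h
  obtain ⟨p, hp⟩ := (hL.standardSlice_row h).exists_intCast_mem
  exact hm.not_ge ((hL.intCast_mem_iff m p).mp hp).1

theorem not_mem_of_right_lt_one {m : ℤ} (hm : m < 1) (r : ℚ) : (some r, some (m : ℚ)) ∉ L :=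
  hL.swap.not_mem_of_left_lt_one hm r

theorem row_eq_infSlice_one {r : ℚ} (h : (some r, some 1) ∈ L) :
    {s | (some r, s) ∈ L} = infSlice 1 :=
  (hL.standardSlice_row h).eq_infSlice_one h
    (by simpa using hL.not_mem_of_right_lt_one (m := -1) (by norm_num) r)

theorem row_eq_infSlice_one_of_one_le {r : ℚ} (hr : 1 ≤ r) :
    {s | (some r, s) ∈ L} = infSlice 1 := by
  have hcol : {s | (s, some 1) ∈ L} = infSlice 1 :=
    hL.swap.row_eq_infSlice_one (by simpa using (hL.intCast_mem_iff 1 1).mpr ⟨le_rfl, le_rfl⟩)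
  have hr1 : some r ∈ {s | (s, some 1) ∈ L} := by
    rw [hcol, mem_infSlice]
    exact_mod_cast hr
  exact hL.row_eq_infSlice_one hr1

theorem one_le_left_of_mem {r₁ r₂ : ℚ} (h : (some r₁, some r₂) ∈ L) : 1 ≤ r₁ := by
  rcases hL.standardSlice_row h with hrow | ⟨k, hk, hrow⟩ | ⟨k, hk, hrow⟩
  · have hneg : some ((-1 : ℤ) : ℚ) ∈ {s | (some r₁, s) ∈ L} := by simp [hrow]
    exact absurd hneg (hL.not_mem_of_right_lt_one (by norm_num) r₁)
  · have hk' : some (k : ℚ) ∈ {s | (some r₁, s) ∈ L} := hrow ▸ mem_infSlice.mpr le_rfl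
    have hcol : {s | (s, some (k : ℚ)) ∈ L} = infSlice 1 :=
      hL.swap.row_eq_infSlice_one_of_one_le (by exact_mod_cast hk)
    have : some r₁ ∈ infSlice 1 := hcol ▸ hk'
    exact_mod_cast mem_infSlice.mp this
  · have hneg : some ((-k : ℤ) : ℚ) ∈ {s | (some r₁, s) ∈ L} :=
      hrow ▸ mem_negSlice.mpr (by push_cast; rfl)
    exact absurd hneg (hL.not_mem_of_right_lt_one (by omega) r₁)

theorem mem_some_some_iff (r₁ r₂ : ℚ) : (some r₁, some r₂) ∈ L ↔ 1 ≤ r₁ ∧ 1 ≤ r₂ := by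
  refine ⟨fun h => ⟨hL.one_le_left_of_mem h, hL.swap.one_le_left_of_mem h⟩, fun ⟨h₁, h₂⟩ => ?_⟩
  change some r₂ ∈ {s | (some r₁, s) ∈ L}
  rw [hL.row_eq_infSlice_one_of_one_le h₁, mem_infSlice]
  exact_mod_cast h₂

end LSpaceSlopeSet

/-- The L-space half of the main theorem, combinatorial core: under the
hypotheses of the structure theorem, if moreover `(1,1) ∈ L`, then for nonzero
rationals `(r₁, r₂) ∈ L ↔ r₁ ≥ 1 ∧ r₂ ≥ 1`; equivalently,
`L = ([1,∞] × [1,∞]) ∪ ({∞} × Q*) ∪ (Q* × {∞})`. -/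
theorem whitehead_lspace_criterion (L : Set (Option ℚ × Option ℚ))
    (hdich : SliceDichotomy L) (hunknot : UnknotCondition L)
    (hnozero : NoZeroCondition L)
    (b₁ b₂ : ℕ)
    (hint : ∀ p₁ p₂ : ℤ,
      (some (p₁ : ℚ), some (p₂ : ℚ)) ∈ L ↔
        (2 * (b₁ : ℤ) + 1 ≤ p₁ ∧ 2 * (b₂ : ℤ) + 1 ≤ p₂))
    (hone : (some (1 : ℚ), some (1 : ℚ)) ∈ L) :
    (∀ r₁ r₂ : ℚ, r₁ ≠ 0 → r₂ ≠ 0 →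
      ((some r₁, some r₂) ∈ L ↔ (1 ≤ r₁ ∧ 1 ≤ r₂))) ∧
    L = (infSlice 1 ×ˢ infSlice 1) ∪ ({none} ×ˢ Qstar) ∪ (Qstar ×ˢ {none}) := by
  have hb : 2 * (b₁ : ℤ) + 1 ≤ 1 ∧ 2 * (b₂ : ℤ) + 1 ≤ 1 := (hint 1 1).mp (by exact_mod_cast hone)
  have hL : LSpaceSlopeSet L := ⟨hdich, hunknot, hnozero, fun p₁ p₂ => by rw [hint]; omega⟩
  exact ⟨fun r₁ r₂ _ _ => hL.mem_some_some_iff r₁ r₂,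
    eq_of_mem_some_some_iff hunknot hnozero hL.mem_some_some_iff⟩
end
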